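/- Let (P,≤,',0,1) be a Boolean poset satisfying the ACC and the DCC, and define for subsets A,B ⊆ P: A + B := Min(U(Max(L(A' ∪ B)) ∪ Max(L(A ∪ B')))) and A · B := Max(L(A ∪ B)) (elements identified with singletons). Then for all x,y,z ∈ P and all subsets A,B ⊆ P: (i) x·x = {x}, x·y = y·x, x·0 = {0}, x·1 = {x}, and (x·(y·z))·z = (x·(y·z))·1; (ii) (x+1)+1 = {x}; (iii) x·y = {x} implies (x+1)·(y+1) = y+1; (iv) x·(x+1) = {0}; (v) ((x+1)·(y+1)+1)·z = ((x·z+1)·(y·z+1)+1)·1; (vi) x ∈ A·B if and only if x·y = {x} for all y ∈ A ∪ B and, for every z ∈ P, (x·z = {x} and z·y = {z} for all y ∈ A ∪ B) implies z = x. -/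

import Mathlib

/-!
Under the ACC and the DCC every element of a set lies below a maximal and above a minimal one,
so `U(Max A) = U(A)` and `L(Min A) = L(A)`. Since the complement exchanges `L` with `U` and `Max`
with `Min`, this gives `x + 1 = {x'}` and `(A · B) + 1 = Min U((A ∪ B)')`; in particular
`(x + 1)(y + 1) + 1 = Min U{x, y}`. After these reductions every identity is a statement about
cones, and (v) becomes the dual distributive law `L(U{x, y} ∪ {z}) = L(U(L{x, z} ∪ L{y, z}))`,
which is the complement image of the assumed one.
-/

/-- Lower bounds of a set in a preorder. -/
def LB {P : Type*} [Preorder P] (A : Set P) : Set P := {x | ∀ a ∈ A, x ≤ a}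

/-- Upper bounds of a set in a preorder. -/
def UB {P : Type*} [Preorder P] (A : Set P) : Set P := {x | ∀ a ∈ A, a ≤ x}

/-- The set of maximal elements of a set. -/
def MaxS {P : Type*} [Preorder P] (A : Set P) : Set P :=
  {x | x ∈ A ∧ ∀ y ∈ A, x ≤ y → y = x}

/-- The set of minimal elements of a set. -/
def MinS {P : Type*} [Preorder P] (A : Set P) : Set P :=
  {x | x ∈ A ∧ ∀ y ∈ A, y ≤ x → y = x}

/-- The symmetric difference A + B := Min U(Max L(A' ∪ B) ∪ Max L(A ∪ B')). -/
def pplus {P : Type*} [Preorder P] (c : P → P) (A B : Set P) : Set P :=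
  MinS (UB (MaxS (LB ((c '' A) ∪ B)) ∪ MaxS (LB (A ∪ (c '' B)))))

/-- The multiplication A · B := Max L(A ∪ B). -/
def pmul {P : Type*} [Preorder P] (A B : Set P) : Set P := MaxS (LB (A ∪ B))

open Set Function

theorem wellFoundedGT_of_forall_not_strictMono {P : Type*} [Preorder P]
    (h : ∀ f : ℕ → P, ¬ StrictMono f) : WellFoundedGT P := by
  rw [WellFoundedGT, isWellFounded_iff, RelEmbedding.wellFounded_iff_isEmpty]
  exact ⟨fun f ↦ h f fun _ _ hab ↦ f.map_rel_iff.2 hab⟩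

theorem wellFoundedLT_of_forall_not_strictAnti {P : Type*} [Preorder P]
    (h : ∀ f : ℕ → P, ¬ StrictAnti f) : WellFoundedLT P :=
  wellFoundedGT_of_forall_not_strictMono (P := Pᵒᵈ) h

section Bounds

variable {P : Type*} [PartialOrder P]

theorem LB_union (A B : Set P) : LB (A ∪ B) = LB A ∩ LB B := lowerBounds_union

theorem LB_singleton (a : P) : LB {a} = Iic a := lowerBounds_singleton

theorem UB_Iic (a : P) : UB (Iic a) = Ici a := upperBounds_Iic

theorem UB_LB_UB (A : Set P) : UB (LB (UB A)) = UB A := gc_upperBounds_lowerBounds.l_u_l_eq_l A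

theorem MaxS_Iic (a : P) : MaxS (Iic a) = {a} := by
  ext x
  exact ⟨fun hx ↦ (hx.2 a le_rfl hx.1).symm,
    fun hx ↦ ⟨hx.le, fun _ hy hxy ↦ le_antisymm (hy.trans hx.ge) hxy⟩⟩

theorem MinS_Ici (a : P) : MinS (Ici a) = {a} := MaxS_Iic (P := Pᵒᵈ) a

theorem MaxS_singleton (a : P) : MaxS {a} = {a} := by
  ext x
  exact ⟨fun hx ↦ hx.1, fun hx ↦ ⟨hx, fun _ hy _ ↦ hy.trans hx.symm⟩⟩

theorem LB_union_singleton_top [OrderTop P] (A : Set P) : LB (A ∪ {⊤}) = LB A := by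
  rw [LB_union, LB_singleton, Iic_top, inter_univ]

theorem UB_union_singleton_bot [OrderBot P] (A : Set P) : UB (A ∪ {⊥}) = UB A :=
  LB_union_singleton_top (P := Pᵒᵈ) A

theorem LB_union_singleton_bot [OrderBot P] (A : Set P) : LB (A ∪ {⊥}) = {⊥} := by
  rw [LB_union, LB_singleton, Iic_bot, inter_eq_right, singleton_subset_iff]
  exact fun _ _ ↦ bot_le

theorem exists_mem_MaxS_ge [WellFoundedGT P] {A : Set P} {a : P} (ha : a ∈ A) :
    ∃ m ∈ MaxS A, a ≤ m := by
  obtain ⟨m, ham, hm⟩ := exists_maximal_ge_of_wellFoundedGT (· ∈ A) a ha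
  exact ⟨m, ⟨hm.1, fun _ hy hmy ↦ (hm.eq_of_le hy hmy).symm⟩, ham⟩

theorem UB_MaxS [WellFoundedGT P] (A : Set P) : UB (MaxS A) = UB A := by
  refine Subset.antisymm (fun u hu a ha ↦ ?_) fun u hu m hm ↦ hu m hm.1
  obtain ⟨m, hm, ham⟩ := exists_mem_MaxS_ge ha
  exact ham.trans (hu m hm)

theorem LB_MinS [WellFoundedLT P] (A : Set P) : LB (MinS A) = LB A := UB_MaxS (P := Pᵒᵈ) A

end Bounds

section Product

variable {P : Type*} [PartialOrder P]

theorem pmul_comm (A B : Set P) : pmul A B = pmul B A := by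
  rw [pmul, pmul, union_comm]

theorem pmul_singleton_self (a : P) : pmul {a} {a} = {a} := by
  rw [pmul, union_self, LB_singleton, MaxS_Iic]

theorem pmul_singleton_eq_self_iff {a b : P} : pmul {a} {b} = {a} ↔ a ≤ b := by
  refine ⟨fun h ↦ (h.symm ▸ mem_singleton a : a ∈ pmul {a} {b}).1 b (mem_union_right _ rfl),
    fun h ↦ ?_⟩
  rw [pmul, LB_union, LB_singleton, LB_singleton, inter_eq_left.2 (Iic_subset_Iic.2 h), MaxS_Iic]

theorem le_of_mem_pmul {A B : Set P} {x b : P} (hx : x ∈ pmul A B) (hb : b ∈ A ∪ B) : x ≤ b :=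
  hx.1 b hb

theorem pmul_singleton_bot [OrderBot P] (A : Set P) : pmul A {⊥} = {⊥} := by
  rw [pmul, LB_union_singleton_bot, MaxS_singleton]

theorem pmul_singleton_top [OrderTop P] (A : Set P) : pmul A {⊤} = MaxS (LB A) := by
  rw [pmul, LB_union_singleton_top]

theorem pmul_nonempty [OrderBot P] [WellFoundedGT P] (A B : Set P) : (pmul A B).Nonempty :=
  let ⟨m, hm, _⟩ := exists_mem_MaxS_ge (A := LB (A ∪ B)) fun _ _ ↦ bot_le
  ⟨m, hm⟩

theorem pmul_MinS_left [WellFoundedLT P] (A B : Set P) : pmul (MinS A) B = pmul A B := by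
  rw [pmul, pmul, LB_union, LB_union, LB_MinS]

theorem pmul_MinS_right [WellFoundedLT P] (A B : Set P) : pmul A (MinS B) = pmul A B := by
  rw [pmul_comm, pmul_MinS_left, pmul_comm]

theorem pmul_singleton_eq_pmul_top_of_forall_le [OrderTop P] {M : Set P} {z : P}
    (hM : M.Nonempty) (hz : ∀ m ∈ M, m ≤ z) : pmul M {z} = pmul M {⊤} := by
  obtain ⟨m, hm⟩ := hM
  rw [pmul_singleton_top, pmul, LB_union, LB_singleton,
    inter_eq_left.2 fun w hw ↦ (hw m hm).trans (hz m hm)]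

theorem pmul_pmul_singleton_eq_pmul_top [BoundedOrder P] [WellFoundedGT P] (A B C : Set P)
    {z : P} (hz : z ∈ C) : pmul (pmul A (pmul B C)) {z} = pmul (pmul A (pmul B C)) {⊤} := by
  refine pmul_singleton_eq_pmul_top_of_forall_le (pmul_nonempty _ _) fun m hm ↦ ?_
  obtain ⟨n, hn⟩ := pmul_nonempty B C
  exact (le_of_mem_pmul hm (mem_union_right _ hn)).trans
    (le_of_mem_pmul hn (mem_union_right _ hz))

end Product

section Complement

variable {P : Type*} [PartialOrder P] {c : P → P}

theorem image_LB_of_antitone_involutive (hc : Antitone c) (hc' : Involutive c) (A : Set P) :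
    c '' LB A = UB (c '' A) := by
  ext x
  simp only [hc'.image_eq_preimage_symm, mem_preimage, LB, UB]
  refine ⟨fun h b hb ↦ ?_, fun h a ha ↦ ?_⟩
  · simpa only [hc' _] using hc (h _ hb)
  · simpa only [hc' a] using hc (h (c a) (by rwa [hc' a]))

theorem image_UB_of_antitone_involutive (hc : Antitone c) (hc' : Involutive c) (A : Set P) :
    c '' UB A = LB (c '' A) := by
  simpa only [hc'.leftInverse.image_image] using
    congrArg (image c) (image_LB_of_antitone_involutive hc hc' (c '' A)).symm

theorem image_MaxS_of_antitone_involutive (hc : Antitone c) (hc' : Involutive c) (A : Set P) :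
    c '' MaxS A = MinS (c '' A) := by
  ext x
  simp only [hc'.image_eq_preimage_symm, mem_preimage, MaxS, MinS]
  refine and_congr_right fun _ ↦ ⟨fun h y hy hyx ↦ hc'.injective (h _ hy (hc hyx)),
    fun h y hy hxy ↦ ?_⟩
  rw [← hc' y, h (c y) (by rwa [hc' y]) (by simpa only [hc' x] using hc hxy)]

theorem map_top_of_antitone_involutive [BoundedOrder P] (hc : Antitone c) (hc' : Involutive c) :
    c ⊤ = ⊥ :=
  le_bot_iff.1 ((hc le_top).trans_eq (hc' ⊥))

theorem LB_UB_pair_union_of_distrib (hc : Antitone c) (hc' : Involutive c)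
    (hdist : ∀ (x y : P) (A : Set P),
      UB (LB {x, y} ∪ A) = UB (LB (UB ({x} ∪ A) ∪ UB ({y} ∪ A))))
    (x y : P) (B : Set P) :
    LB (UB {x, y} ∪ B) = LB (UB (LB ({x} ∪ B) ∪ LB ({y} ∪ B))) := by
  simpa only [image_union, image_UB_of_antitone_involutive hc hc',
    image_LB_of_antitone_involutive hc hc', hc'.leftInverse.image_image, image_pair,
    image_singleton, hc' _] using congrArg (image c) (hdist (c x) (c y) (c '' B))

end Complement

section Sum

variable {P : Type*} [PartialOrder P] [BoundedOrder P] [WellFoundedGT P] {c : P → P}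

theorem pplus_singleton_top (hc : Antitone c) (hc' : Involutive c) (S : Set P) :
    pplus c S {⊤} = MinS (UB (LB (c '' S))) := by
  rw [pplus, image_singleton, map_top_of_antitone_involutive hc hc', LB_union_singleton_top,
    LB_union_singleton_bot, MaxS_singleton, UB_union_singleton_bot, UB_MaxS]

theorem singleton_pplus_singleton_top (hc : Antitone c) (hc' : Involutive c) (x : P) :
    pplus c {x} {⊤} = {c x} := by
  rw [pplus_singleton_top hc hc', image_singleton, LB_singleton, UB_Iic, MinS_Ici]

variable [WellFoundedLT P]

theorem pmul_pplus_singleton_top (hc : Antitone c) (hc' : Involutive c) (A B : Set P) :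
    pplus c (pmul A B) {⊤} = MinS (UB (c '' (A ∪ B))) := by
  rw [pplus_singleton_top hc hc', pmul, image_MaxS_of_antitone_involutive hc hc', LB_MinS,
    image_LB_of_antitone_involutive hc hc', UB_LB_UB]

theorem pmul_join_distrib (hc : Antitone c) (hc' : Involutive c)
    (hdist : ∀ (x y : P) (A : Set P),
      UB (LB {x, y} ∪ A) = UB (LB (UB ({x} ∪ A) ∪ UB ({y} ∪ A))))
    (x y z : P) :
    pmul (pplus c (pmul (pplus c {x} {⊤}) (pplus c {y} {⊤})) {⊤}) {z} =
      pmul (pplus c (pmul (pplus c (pmul {x} {z}) {⊤}) (pplus c (pmul {y} {z}) {⊤})) {⊤})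
        {⊤} := by
  simp only [singleton_pplus_singleton_top hc hc', pmul_pplus_singleton_top hc hc',
    pmul_MinS_left, pmul_MinS_right, image_union, image_singleton, hc' _,
    image_UB_of_antitone_involutive hc hc']
  rw [pmul_singleton_top, pmul, singleton_union,
    LB_UB_pair_union_of_distrib hc hc' hdist]

end Sum

theorem stmt_15_general {P : Type*} [PartialOrder P] [BoundedOrder P] (c : P → P)
    (hanti : ∀ x y : P, x ≤ y → c y ≤ c x)
    (hinv : ∀ x : P, c (c x) = x)
    (hcompL : ∀ x : P, LB {x, c x} = {(⊥ : P)})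
    (hdist : ∀ (x y : P) (A : Set P),
      UB (LB {x, y} ∪ A) = UB (LB (UB ({x} ∪ A) ∪ UB ({y} ∪ A))))
    (hACC : ∀ f : ℕ → P, ¬ StrictMono f)
    (hDCC : ∀ f : ℕ → P, ¬ StrictAnti f) :
    (∀ x y z : P,
      pmul {x} {x} = {x} ∧
      pmul {x} {y} = pmul {y} {x} ∧
      pmul {x} {(⊥ : P)} = {(⊥ : P)} ∧
      pmul {x} {(⊤ : P)} = {x} ∧
      pmul (pmul {x} (pmul {y} {z})) {z} = pmul (pmul {x} (pmul {y} {z})) {(⊤ : P)}) ∧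
    (∀ x : P, pplus c (pplus c {x} {(⊤ : P)}) {(⊤ : P)} = {x}) ∧
    (∀ x y : P, pmul {x} {y} = {x} →
      pmul (pplus c {x} {(⊤ : P)}) (pplus c {y} {(⊤ : P)}) = pplus c {y} {(⊤ : P)}) ∧
    (∀ x : P, pmul {x} (pplus c {x} {(⊤ : P)}) = {(⊥ : P)}) ∧
    (∀ x y z : P,
      pmul (pplus c (pmul (pplus c {x} {(⊤ : P)}) (pplus c {y} {(⊤ : P)})) {(⊤ : P)}) {z} =
      pmul
        (pplus c
          (pmul (pplus c (pmul {x} {z}) {(⊤ : P)}) (pplus c (pmul {y} {z}) {(⊤ : P)}))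
          {(⊤ : P)})
        {(⊤ : P)}) ∧
    (∀ (x : P) (A B : Set P), x ∈ pmul A B ↔
      ((∀ y ∈ A ∪ B, pmul {x} {y} = {x}) ∧
        ∀ z : P, (pmul {x} {z} = {x} ∧ ∀ y ∈ A ∪ B, pmul {z} {y} = {z}) → z = x)) := by
  have := wellFoundedGT_of_forall_not_strictMono hACC
  have := wellFoundedLT_of_forall_not_strictAnti hDCC
  have hc : Antitone c := fun x y h ↦ hanti x y h
  have hc' : Involutive c := hinv
  have hcompl := singleton_pplus_singleton_top hc hc'
  refine ⟨fun x y z ↦ ⟨pmul_singleton_self x, pmul_comm _ _, pmul_singleton_bot _, ?_,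
    pmul_pmul_singleton_eq_pmul_top _ _ _ rfl⟩, fun x ↦ ?_, fun x y hxy ↦ ?_, fun x ↦ ?_,
    pmul_join_distrib hc hc' hdist, fun x A B ↦ ?_⟩
  · rw [pmul_singleton_top, LB_singleton, MaxS_Iic]
  · rw [hcompl, hcompl, hinv]
  · rw [hcompl, hcompl, pmul_comm, pmul_singleton_eq_self_iff]
    exact hc (pmul_singleton_eq_self_iff.1 hxy)
  · rw [hcompl, pmul, singleton_union, hcompL, MaxS_singleton]
  · simp only [pmul_singleton_eq_self_iff]
    exact and_congr_right fun _ ↦ ⟨fun h z hz ↦ h z hz.2 hz.1, fun h z hz hxz ↦ h z ⟨hxz, hz⟩⟩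

theorem stmt_15 {P : Type*} [PartialOrder P] [BoundedOrder P] (c : P → P)
    (hanti : ∀ x y : P, x ≤ y → c y ≤ c x)
    (hinv : ∀ x : P, c (c x) = x)
    (hcompL : ∀ x : P, LB {x, c x} = {(⊥ : P)})
    (hcompU : ∀ x : P, UB {x, c x} = {(⊤ : P)})
    (hdist : ∀ (x y : P) (A : Set P),
      UB (LB {x, y} ∪ A) = UB (LB (UB ({x} ∪ A) ∪ UB ({y} ∪ A))))
    (hACC : ∀ f : ℕ → P, ¬ StrictMono f)
    (hDCC : ∀ f : ℕ → P, ¬ StrictAnti f) :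
    (∀ x y z : P,
      pmul {x} {x} = {x} ∧
      pmul {x} {y} = pmul {y} {x} ∧
      pmul {x} {(⊥ : P)} = {(⊥ : P)} ∧
      pmul {x} {(⊤ : P)} = {x} ∧
      pmul (pmul {x} (pmul {y} {z})) {z} = pmul (pmul {x} (pmul {y} {z})) {(⊤ : P)}) ∧
    (∀ x : P, pplus c (pplus c {x} {(⊤ : P)}) {(⊤ : P)} = {x}) ∧
    (∀ x y : P, pmul {x} {y} = {x} →
      pmul (pplus c {x} {(⊤ : P)}) (pplus c {y} {(⊤ : P)}) = pplus c {y} {(⊤ : P)}) ∧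
    (∀ x : P, pmul {x} (pplus c {x} {(⊤ : P)}) = {(⊥ : P)}) ∧
    (∀ x y z : P,
      pmul (pplus c (pmul (pplus c {x} {(⊤ : P)}) (pplus c {y} {(⊤ : P)})) {(⊤ : P)}) {z} =
      pmul
        (pplus c
          (pmul (pplus c (pmul {x} {z}) {(⊤ : P)}) (pplus c (pmul {y} {z}) {(⊤ : P)}))
          {(⊤ : P)})
        {(⊤ : P)}) ∧
    (∀ (x : P) (A B : Set P), x ∈ pmul A B ↔
      ((∀ y ∈ A ∪ B, pmul {x} {y} = {x}) ∧
        ∀ z : P, (pmul {x} {z} = {x} ∧ ∀ y ∈ A ∪ B, pmul {z} {y} = {z}) → z = x)) :=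
  stmt_15_general c hanti hinv hcompL hdist hACC hDCC
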